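/- Suppose k·α ≤ 1 and let λ > 0 be a constant. Then f_n(η₁(n))^{r·m} → exp(k·λ·p·r/(1−p)) as n → ∞. -/

import Mathlib

open Filter Finset

/-- Domain size `d = n^α` of Model RB. -/
noncomputable def dRB (α : ℝ) (n : ℕ) : ℝ := (n : ℝ) ^ α

/-- `m = n · ln d`. -/
noncomputable def mRB (α : ℝ) (n : ℕ) : ℝ := (n : ℝ) * Real.log (dRB α n)

/-- `f_n(s) = 1 + (p/(1-p)) (s^k - d^{-k})/(1 - d^{-k})`. -/
noncomputable def fRB (α p : ℝ) (k n : ℕ) (s : ℝ) : ℝ :=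
  1 + (p / (1 - p)) * (s ^ k - dRB α n ^ (-(k : ℝ))) / (1 - dRB α n ^ (-(k : ℝ)))

/-- `B_n(S) = C(n,S) (1/d)^S (1-1/d)^{n-S}`. -/
noncomputable def BRB (α : ℝ) (n S : ℕ) : ℝ :=
  (n.choose S : ℝ) * (1 / dRB α n) ^ S * (1 - 1 / dRB α n) ^ (n - S)

/-- `W_n(S) = f_n(S/n)^{r m}`. -/
noncomputable def WRB (α p r : ℝ) (k n S : ℕ) : ℝ :=
  fRB α p k n ((S : ℝ) / (n : ℝ)) ^ (r * mRB α n)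

/-- `Φ_n(S) = B_n(S) W_n(S)`. -/
noncomputable def PhiRB (α p r : ℝ) (k n S : ℕ) : ℝ := BRB α n S * WRB α p r k n S

/-- `g(s) = -k(k-1)(1-s)s^{k-1}/2`. -/
noncomputable def gRB (k : ℕ) (s : ℝ) : ℝ :=
  -((k : ℝ) * ((k : ℝ) - 1)) * (1 - s) * s ^ (k - 1) / 2

/-- `η₁(n) = 1/d + λ/(n^{1-(k-1)α} ln d)`. -/
noncomputable def eta1 (α lam : ℝ) (k n : ℕ) : ℝ :=
  1 / dRB α n + lam / ((n : ℝ) ^ (1 - ((k : ℝ) - 1) * α) * Real.log (dRB α n))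

/-- First moment `E[X] = d^n (1-p)^{r m}`. -/
noncomputable def E1RB (α p r : ℝ) (n : ℕ) : ℝ := dRB α n ^ n * (1 - p) ^ (r * mRB α n)

/-- Second moment `E[X²]`. -/
noncomputable def E2RB (α p r : ℝ) (k n : ℕ) : ℝ :=
  ∑ S ∈ Finset.range (n + 1),
    dRB α n ^ n * (n.choose S : ℝ) * (dRB α n - 1) ^ (n - S) *
      ((1 - p) * ((S.choose k : ℝ) / (n.choose k : ℝ)) +
        ((1 - p) ^ 2 - p * (1 - p) * dRB α n ^ (-(k : ℝ)) / (1 - dRB α n ^ (-(k : ℝ)))) *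
          (1 - (S.choose k : ℝ) / (n.choose k : ℝ))) ^ (r * mRB α n)

/-!
Write `f_n(η₁)^{rm} = (1 + u_n)^{v_n}` with `v_n = r m`. As `log (1 + u) ~ u`, it suffices that
`u_n → 0` and `v_n u_n → kλpr/(1-p)`. The choice of `η₁` makes `m (η₁ - 1/d) = λ d^{k-1}`, so
factoring `η₁^k - d^{-k}` as a geometric sum gives `m (η₁^k - d^{-k}) = λ ∑_{i<k} (η₁ d)^i`, and
`η₁ d = 1 + λ n^{kα-1} / ln d → 1` because `kα ≤ 1`; hence `m (η₁^k - d^{-k}) → kλ`.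
-/

open Topology

theorem tendsto_one_add_rpow_exp_of_tendsto_mul {ι : Type*} {l : Filter ι} {u v : ι → ℝ}
    {c : ℝ} (hu : Tendsto u l (𝓝 0)) (huv : Tendsto (fun i ↦ v i * u i) l (𝓝 c)) :
    Tendsto (fun i ↦ (1 + u i) ^ v i) l (𝓝 (Real.exp c)) := by
  set g : ℝ → ℝ := fun x ↦ Real.log (1 + x)
  have hg : HasDerivAt g 1 0 := by
    simpa using ((hasDerivAt_id (0 : ℝ)).const_add 1).log (by norm_num)
  -- `dslope g 0` is `log (1 + x) / x` off `0` and continuous at `0`, so no case `u i = 0` is lost.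
  have hslope : Tendsto (dslope g 0) (𝓝 0) (𝓝 1) := by
    simpa [dslope_same, hg.deriv] using
      (continuousAt_dslope_same.2 hg.differentiableAt).tendsto
  have hlog : Tendsto (fun i ↦ v i * Real.log (1 + u i)) l (𝓝 c) := by
    refine (mul_one c ▸ huv.mul (hslope.comp hu)).congr fun i ↦ ?_
    rcases eq_or_ne (u i) 0 with h | h
    · simp [h, g]
    · simp only [Function.comp_apply, dslope_of_ne _ h, slope_def_field, g, add_zero, Real.log_one,
        sub_zero]
      field_simp
  refine ((Real.continuous_exp.tendsto c).comp hlog).congr' ?_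
  filter_upwards [hu.eventually (eventually_gt_nhds (show (-1 : ℝ) < 0 by norm_num))] with i hi
  rw [Function.comp_apply, Real.rpow_def_of_pos (by linarith), mul_comm]

theorem pow_sub_inv_pow_eq {K : Type*} [Field K] {x d : K} (hd : d ≠ 0) {k : ℕ} (hk : 1 ≤ k) :
    x ^ k - d⁻¹ ^ k = (x - d⁻¹) * d⁻¹ ^ (k - 1) * ∑ i ∈ range k, (x * d) ^ i := by
  obtain ⟨j, rfl⟩ := Nat.exists_eq_add_of_le' hk
  rw [Nat.add_sub_cancel, inv_pow, inv_pow]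
  field_simp
  linear_combination (-d ^ (j + 1)) * geom_sum_mul (x * d) (j + 1)

section

variable {α : ℝ} {n : ℕ}

theorem one_lt_dRB (hα : 0 < α) (hn : 1 < n) : 1 < dRB α n :=
  Real.one_lt_rpow (by exact_mod_cast hn) hα

theorem tendsto_dRB_atTop (hα : 0 < α) : Tendsto (dRB α) atTop atTop :=
  (tendsto_rpow_atTop hα).comp tendsto_natCast_atTop_atTop

theorem tendsto_log_dRB_atTop (hα : 0 < α) : Tendsto (fun n ↦ Real.log (dRB α n)) atTop atTop :=
  Real.tendsto_log_atTop.comp (tendsto_dRB_atTop hα)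

theorem tendsto_mRB_atTop (hα : 0 < α) : Tendsto (mRB α) atTop atTop :=
  tendsto_natCast_atTop_atTop.atTop_mul_atTop₀ (tendsto_log_dRB_atTop hα)

theorem dRB_rpow_neg_natCast (hn : 0 < n) (k : ℕ) : dRB α n ^ (-(k : ℝ)) = (dRB α n)⁻¹ ^ k := by
  rw [Real.rpow_neg (by unfold dRB; positivity), Real.rpow_natCast, inv_pow]

theorem tendsto_one_sub_dRB_rpow_neg (hα : 0 < α) {k : ℕ} (hk : 1 ≤ k) :
    Tendsto (fun n ↦ 1 - dRB α n ^ (-(k : ℝ))) atTop (𝓝 1) := by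
  simpa only [sub_zero, Function.comp_apply] using
    ((tendsto_rpow_neg_atTop (Nat.cast_pos.2 hk)).comp (tendsto_dRB_atTop hα)).const_sub 1

variable {lam : ℝ} {k : ℕ}

theorem mRB_mul_eta1_sub_inv (hα : 0 < α) (hk : 1 ≤ k) (hn : 1 < n) :
    mRB α n * (eta1 α lam k n - (dRB α n)⁻¹) = lam * dRB α n ^ (k - 1) := by
  have hn0 : (0 : ℝ) < n := by positivity
  have hL : Real.log (dRB α n) ≠ 0 := (Real.log_pos (one_lt_dRB hα hn)).ne'
  have hpow : (n : ℝ) / (n : ℝ) ^ (1 - ((k : ℝ) - 1) * α) = dRB α n ^ (k - 1) := by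
    rw [Real.rpow_sub hn0, Real.rpow_one, div_div_cancel₀ hn0.ne', dRB, ← Real.rpow_natCast,
      ← Real.rpow_mul hn0.le, Nat.cast_sub hk, Nat.cast_one, mul_comm]
  rw [← hpow, mRB, eta1, one_div, add_sub_cancel_left]
  field_simp

theorem eta1_mul_dRB (hn : 0 < n) :
    eta1 α lam k n * dRB α n = 1 + lam * ((n : ℝ) ^ ((k : ℝ) * α - 1) / Real.log (dRB α n)) := by
  have hn0 : (0 : ℝ) < n := by positivity
  have hpow : dRB α n / (n : ℝ) ^ (1 - ((k : ℝ) - 1) * α) = (n : ℝ) ^ ((k : ℝ) * α - 1) := by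
    rw [dRB, ← Real.rpow_sub hn0]
    ring_nf
  have hd : dRB α n ≠ 0 := by unfold dRB; positivity
  rw [eta1, ← hpow]
  field_simp

theorem tendsto_eta1_mul_dRB (hα : 0 < α) (hkα : (k : ℝ) * α ≤ 1) :
    Tendsto (fun n ↦ eta1 α lam k n * dRB α n) atTop (𝓝 1) := by
  have hquot : Tendsto (fun n : ℕ ↦ (n : ℝ) ^ ((k : ℝ) * α - 1) / Real.log (dRB α n)) atTop
      (𝓝 0) := by
    refine tendsto_of_tendsto_of_tendsto_of_le_of_le' tendsto_const_nhds
      (tendsto_log_dRB_atTop hα).inv_tendsto_atTop ?_ ?_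
    · filter_upwards [eventually_gt_atTop 1] with n hn
      have := Real.log_pos (one_lt_dRB hα hn)
      positivity
    · filter_upwards [eventually_gt_atTop 1] with n hn
      rw [div_eq_mul_inv]
      refine mul_le_of_le_one_left (inv_nonneg.2 (Real.log_pos (one_lt_dRB hα hn)).le) ?_
      exact Real.rpow_le_one_of_one_le_of_nonpos (by exact_mod_cast hn.le) (by linarith)
  refine (add_zero (1 : ℝ) ▸ mul_zero lam ▸ (hquot.const_mul lam).const_add 1).congr' ?_
  filter_upwards [eventually_gt_atTop 0] with n hn
  exact (eta1_mul_dRB hn).symm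

theorem mRB_mul_eta1_pow_sub (hα : 0 < α) (hk : 1 ≤ k) (hn : 1 < n) :
    mRB α n * (eta1 α lam k n ^ k - dRB α n ^ (-(k : ℝ))) =
      lam * ∑ i ∈ range k, (eta1 α lam k n * dRB α n) ^ i := by
  have hd : dRB α n ≠ 0 := (zero_lt_one.trans (one_lt_dRB hα hn)).ne'
  rw [dRB_rpow_neg_natCast (by omega), pow_sub_inv_pow_eq hd hk, ← mul_assoc, ← mul_assoc,
    mRB_mul_eta1_sub_inv hα hk hn, mul_assoc lam, ← mul_pow, mul_inv_cancel₀ hd, one_pow, mul_one]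

theorem tendsto_mRB_mul_eta1_pow_sub (hα : 0 < α) (hk : 1 ≤ k) (hkα : (k : ℝ) * α ≤ 1) :
    Tendsto (fun n ↦ mRB α n * (eta1 α lam k n ^ k - dRB α n ^ (-(k : ℝ)))) atTop
      (𝓝 (lam * k)) := by
  have hsum : Tendsto (fun n ↦ ∑ i ∈ range k, (eta1 α lam k n * dRB α n) ^ i) atTop (𝓝 k) := by
    simpa using tendsto_finsetSum (range k) fun i _ ↦ (tendsto_eta1_mul_dRB hα hkα).pow i
  refine (hsum.const_mul lam).congr' ?_
  filter_upwards [eventually_gt_atTop 1] with n hn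
  exact (mRB_mul_eta1_pow_sub hα hk hn).symm

end

theorem stmt4_general (α p r lam : ℝ) (k : ℕ) (hα : 0 < α) (hk : 2 ≤ k)
    (hkα : (k : ℝ) * α ≤ 1) :
    Filter.Tendsto (fun n : ℕ => fRB α p k n (eta1 α lam k n) ^ (r * mRB α n))
      Filter.atTop (nhds (Real.exp ((k : ℝ) * lam * p * r / (1 - p)))) := by
  have hk₁ : 1 ≤ k := by omega
  have hm := tendsto_mRB_mul_eta1_pow_sub (lam := lam) hα hk₁ hkα
  have hdenom := tendsto_one_sub_dRB_rpow_neg hα hk₁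
  have hdiff : Tendsto (fun n ↦ eta1 α lam k n ^ k - dRB α n ^ (-(k : ℝ))) atTop (𝓝 0) := by
    refine (hm.div_atTop (tendsto_mRB_atTop hα)).congr' ?_
    filter_upwards [(tendsto_mRB_atTop hα).eventually_gt_atTop 0] with n hn
    exact mul_div_cancel_left₀ _ hn.ne'
  refine tendsto_one_add_rpow_exp_of_tendsto_mul
    (u := fun n ↦ p / (1 - p) * (eta1 α lam k n ^ k - dRB α n ^ (-(k : ℝ))) /
      (1 - dRB α n ^ (-(k : ℝ)))) ?_ ?_
  · simpa [Pi.div_def] using (hdiff.const_mul (p / (1 - p))).div hdenom one_ne_zero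
  · convert (hm.const_mul (r * (p / (1 - p)))).div hdenom one_ne_zero using 2 with n
    · simp only [Pi.div_apply]
      ring
    · ring

/-- if kα ≤ 1 and λ > 0, then W(nη₁) = f_n(η₁)^{rm} → exp(kλpr/(1-p)). -/
theorem stmt4 (α p r τ lam : ℝ) (k : ℕ) (hα : 0 < α) (hk : 2 ≤ k)
    (hp0 : 0 < p) (hp1 : p < 1) (hτ : τ = 1 / (1 - p)) (hr0 : 0 < r)
    (hkα : (k : ℝ) * α ≤ 1) (hlam : 0 < lam) :
    Filter.Tendsto (fun n : ℕ => fRB α p k n (eta1 α lam k n) ^ (r * mRB α n))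
      Filter.atTop (nhds (Real.exp ((k : ℝ) * lam * p * r / (1 - p)))) :=
  stmt4_general α p r lam k hα hk hkα
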